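/- arXiv:1512.02844 — 2 statements merged into one kernel-verified Lean document; each statement's English description precedes it below -/
import Mathlib

section
/- Let n ≥ 3 and S = {f, rf} in the dihedral group D_n. Then λ₂(D_n, S) = 2. -/
/-!
With `S = {f, rf} = {sr 0, sr (-1)}`, every product `s s'` of two generators is one of the
rotations `1, r, r⁻¹`, and this set is closed under conjugation since `f r f⁻¹ = r⁻¹`. Hence every
`g s s' g⁻¹` is again a product of two generators and has length at most `2`, while
`r⁻¹ = f · rf` has length exactly `2`: it is neither `1` nor a generator as soon as `n ≠ 1`.
-/

open DihedralGroup

/-- The word length of `g` with respect to a generating set `S`: the minimal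
number of letters of `S` needed to write `g` as a product. -/
noncomputable def wordLength {G : Type*} [Group G] (S : Set G) (g : G) : ℕ :=
  sInf {k | ∃ l : List G, (∀ x ∈ l, x ∈ S) ∧ l.prod = g ∧ l.length = k}

open scoped Pointwise

section WordLength

variable {G : Type*} [Group G] {S : Set G} {g : G}

lemma wordLength_list_prod_le {l : List G} (hl : ∀ x ∈ l, x ∈ S) :
    wordLength S l.prod ≤ l.length :=
  Nat.sInf_le ⟨l, hl, rfl, rfl⟩

lemma wordLength_le_two_of_mem_mul (hg : g ∈ S * S) : wordLength S g ≤ 2 := by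
  obtain ⟨s, hs, s', hs', rfl⟩ := hg
  simpa using wordLength_list_prod_le (l := [s, s']) (by simp [hs, hs'])

lemma wordLength_eq_two (hg : g ∈ S * S) (h1 : g ≠ 1) (hS : g ∉ S) : wordLength S g = 2 := by
  obtain ⟨s, hs, s', hs', rfl⟩ := hg
  refine (wordLength_le_two_of_mem_mul ⟨s, hs, s', hs', rfl⟩).antisymm
    (le_csInf ⟨2, [s, s'], by simp [hs, hs'], by simp, rfl⟩ ?_)
  rintro k ⟨l, hl, hprod, rfl⟩
  match l, hl, hprod with
  | [], _, hprod => exact absurd hprod.symm h1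
  | [_], hl, hprod => exact absurd (by simpa [← hprod] using hl) hS
  | _ :: _ :: _, _, _ => simp

end WordLength

namespace DihedralGroup

variable {n : ℕ}

lemma conj_r_eq_or (g : DihedralGroup n) (i : ZMod n) :
    g * r i * g⁻¹ = r i ∨ g * r i * g⁻¹ = r (-i) := by
  rcases g with j | j <;> simp [r_mul_r, sr_mul_r, sr_mul_sr, inv_r, inv_sr]

lemma mul_mem_smallRotations {s s' : DihedralGroup n} (hs : s ∈ ({sr 0, r 1 * sr 0} : Set _))
    (hs' : s' ∈ ({sr 0, r 1 * sr 0} : Set _)) :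
    s * s' ∈ ({1, r 1, r (-1)} : Set (DihedralGroup n)) := by
  simp only [Set.mem_insert_iff, Set.mem_singleton_iff] at hs hs'
  rcases hs with rfl | rfl <;> rcases hs' with rfl | rfl <;> simp [r_mul_sr, sr_mul_sr]

lemma conj_mem_smallRotations {x : DihedralGroup n} (g : DihedralGroup n)
    (hx : x ∈ ({1, r 1, r (-1)} : Set (DihedralGroup n))) :
    g * x * g⁻¹ ∈ ({1, r 1, r (-1)} : Set (DihedralGroup n)) := by
  simp only [Set.mem_insert_iff, Set.mem_singleton_iff] at hx ⊢
  rcases hx with rfl | rfl | rfl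
  · simp
  · rcases conj_r_eq_or g 1 with h | h <;> simp [h]
  · rcases conj_r_eq_or g (-1) with h | h <;> simp [h]

lemma mem_mul_self_of_mem_smallRotations {x : DihedralGroup n}
    (hx : x ∈ ({1, r 1, r (-1)} : Set (DihedralGroup n))) :
    x ∈ ({sr 0, r 1 * sr 0} : Set (DihedralGroup n)) * {sr 0, r 1 * sr 0} := by
  simp only [Set.mem_insert_iff, Set.mem_singleton_iff] at hx
  rcases hx with rfl | rfl | rfl
  · exact ⟨sr 0, by simp, sr 0, by simp, sr_mul_self 0⟩
  · exact ⟨r 1 * sr 0, by simp, sr 0, by simp, by simp [r_mul_sr, sr_mul_sr]⟩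
  · exact ⟨sr 0, by simp, r 1 * sr 0, by simp, by simp [r_mul_sr, sr_mul_sr]⟩

end DihedralGroup

theorem stmt10 (n : ℕ) (hn : 3 ≤ n) :
    letI S : Set (DihedralGroup n) := {sr 0, r 1 * sr 0}
    IsGreatest {k | ∃ g : DihedralGroup n, ∃ s ∈ S, ∃ s' ∈ S,
        k = wordLength S (g * s * s' * g⁻¹)} 2 := by
  have : Nontrivial (ZMod n) := ZMod.nontrivial_iff.mpr (by omega)
  constructor
  · have hrot : (1 : DihedralGroup n) * sr 0 * (r 1 * sr 0) * 1⁻¹ = r (-1) := by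
      simp [r_mul_sr, sr_mul_sr]
    refine ⟨1, sr 0, by simp, r 1 * sr 0, by simp, ?_⟩
    rw [hrot, wordLength_eq_two (mem_mul_self_of_mem_smallRotations (by simp))]
    · simp [← r_zero]
    · simp [r_mul_sr]
  · rintro k ⟨g, s, hs, s', hs', rfl⟩
    rw [mul_assoc g s s']
    exact wordLength_le_two_of_mem_mul <| mem_mul_self_of_mem_smallRotations <|
      conj_mem_smallRotations g (mul_mem_smallRotations hs hs')
end

section
/- Let n be even, n ≥ 6, and S = {f, rf, r^{n/2}} in D_n. Then λ₁(D_n, S) = n/2. -/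
/-!
The Cayley graph of `D_n` with respect to the two reflections `f` and `rf` is a cycle of
length `2n`, and left multiplication by the central involution `r^{n/2}` joins every vertex to
its antipode. Conjugates of `f` and `rf` are exactly the reflections, and `r^{n/2}` is its own
conjugate, so `λ₁` is the largest word length of a reflection. Alternating words `f·rf·f⋯`,
possibly preceded by `r^{n/2}`, reach every reflection within `n/2` letters. Conversely, the
distance from `0` on the cycle with antipodal chords grows by at most one per letter and
equals `n/2` at the reflection `sr ⌊n/4⌋`.
-/

open DihedralGroup

section WordLength

variable {G : Type*} [Group G] {S : Set G}

theorem wordLength_le_length {g : G} {l : List G} (hl : ∀ x ∈ l, x ∈ S) (hg : l.prod = g) :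
    wordLength S g ≤ l.length :=
  Nat.sInf_le ⟨l, hl, hg, rfl⟩

theorem exists_list_prod_eq_pow_mul {s t : G} (hs : s ∈ S) (ht : t ∈ S) (m : ℕ) :
    ∃ l : List G,
      (∀ x ∈ l, x ∈ S) ∧ l.prod = (s * t) ^ m * s ∧ l.length = 2 * m + 1 := by
  refine ⟨(List.replicate m [s, t]).flatten ++ [s], ?_, by simp [List.prod_flatten],
    by simp; ring⟩
  simp only [List.mem_append, List.mem_flatten, List.mem_replicate, List.mem_singleton]
  rintro x (⟨_, ⟨-, rfl⟩, hx⟩ | rfl)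
  · simp only [List.mem_cons, List.not_mem_nil, or_false] at hx
    rcases hx with rfl | rfl <;> assumption
  · exact hs

theorem apply_prod_le_add_length {φ : G → ℕ} (hφ : ∀ s ∈ S, ∀ g, φ (s * g) ≤ φ g + 1)
    {l : List G} (hl : ∀ x ∈ l, x ∈ S) : φ l.prod ≤ φ 1 + l.length := by
  induction l with
  | nil => simp
  | cons s l ih =>
    simp only [List.forall_mem_cons] at hl
    rw [List.prod_cons, List.length_cons]
    linarith [hφ s hl.1 l.prod, ih hl.2]

theorem apply_le_add_wordLength {φ : G → ℕ} (hφ : ∀ s ∈ S, ∀ g, φ (s * g) ≤ φ g + 1)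
    {g : G} {l : List G} (hl : ∀ x ∈ l, x ∈ S) (hg : l.prod = g) :
    φ g ≤ φ 1 + wordLength S g := by
  obtain ⟨l', hl', rfl, hlen⟩ := Nat.sInf_mem (⟨_, l, hl, hg, rfl⟩ :
    {k | ∃ l' : List G, (∀ x ∈ l', x ∈ S) ∧ l'.prod = g ∧ l'.length = k}.Nonempty)
  rw [wordLength, ← hlen]
  exact apply_prod_le_add_length hφ hl'

end WordLength

namespace ZMod

theorem natAbs_valMinAbs_one_le (m : ℕ) : (1 : ZMod m).valMinAbs.natAbs ≤ 1 := by
  rcases m with _ | _ | m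
  · rfl
  · decide
  · rw [← Nat.cast_one (R := ZMod (m + 2)), valMinAbs_natCast_of_le_half (by omega)]; rfl

theorem neg_natCast_half {n : ℕ} (heven : Even n) :
    -((n / 2 : ℕ) : ZMod n) = (n / 2 : ℕ) := by
  rw [neg_eq_iff_add_eq_zero, ← Nat.cast_add, ← two_mul, Nat.two_mul_div_two_of_even heven,
    natCast_self]

theorem natCast_add_self_eq_zero (n : ℕ) : (n : ZMod (2 * n)) + n = 0 := by
  rw [← two_mul]
  exact_mod_cast natCast_self (2 * n)

def doubleHom (n : ℕ) : ZMod n →+ ZMod (2 * n) :=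
  lift n ⟨(AddMonoidHom.mulLeft 2).comp (Int.castAddHom _), by
    show (2 : ZMod (2 * n)) * ((n : ℤ) : ZMod (2 * n)) = 0
    exact_mod_cast natCast_self (2 * n)⟩

theorem doubleHom_natCast {n : ℕ} (k : ℕ) : doubleHom n k = 2 * k := by
  rw [← Int.cast_natCast, doubleHom, lift_coe]
  simp

end ZMod

/-- For `c + c = 0`, the graph distance from `0` in the cycle `ZMod m` with chords `p — p + c`
(a shortest path uses at most one chord); for `c = n` in `ZMod (2 * n)` this graph is the
Möbius ladder. -/
def chordDist {m : ℕ} (c p : ZMod m) : ℕ :=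
  min p.valMinAbs.natAbs ((p + c).valMinAbs.natAbs + 1)

section ChordDist

variable {m : ℕ} {c : ZMod m}

@[simp]
theorem chordDist_zero : chordDist c 0 = 0 := by
  simp [chordDist]

theorem chordDist_add_le {e : ZMod m} (he : e.valMinAbs.natAbs ≤ 1) (p : ZMod m) :
    chordDist c (p + e) ≤ chordDist c p + 1 := by
  have h₁ := (ZMod.natAbs_valMinAbs_add_le p e).trans (Int.natAbs_add_le _ _)
  have h₂ := (ZMod.natAbs_valMinAbs_add_le (p + c) e).trans (Int.natAbs_add_le _ _)
  rw [add_right_comm] at h₂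
  unfold chordDist
  omega

theorem chordDist_add_self_le (hc : c + c = 0) (p : ZMod m) :
    chordDist c (p + c) ≤ chordDist c p + 1 := by
  unfold chordDist
  rw [add_assoc, hc, add_zero]
  omega

end ChordDist

namespace DihedralGroup

variable {n : ℕ}

/-- The generating set `{f, rf, r^{n/2}}` with `f = sr 0`. -/
def ladderGens (n : ℕ) : Set (DihedralGroup n) := {sr 0, r 1 * sr 0, r 1 ^ (n / 2)}

/-- Left multiplication by `sr 0` or `r 1 * sr 0` moves `cyclePos` by `±1`, so this is the
position on the `2n`-cycle formed by the Cayley graph of `D_n` with respect to these two. -/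
def cyclePos : DihedralGroup n → ZMod (2 * n)
  | r k => ZMod.doubleHom n k
  | sr k => ZMod.doubleHom n k + 1

theorem cyclePos_mul (heven : Even n) {s : DihedralGroup n} (hs : s ∈ ladderGens n)
    (g : DihedralGroup n) :
    cyclePos (s * g) = cyclePos g + 1 ∨ cyclePos (s * g) = cyclePos g - 1 ∨
      cyclePos (s * g) = cyclePos g + n := by
  have h1 : ZMod.doubleHom n 1 = 2 := by simpa using ZMod.doubleHom_natCast (n := n) 1
  have hhalf : ZMod.doubleHom n (n / 2 : ℕ) = n := by
    rw [ZMod.doubleHom_natCast]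
    exact_mod_cast congrArg Nat.cast (Nat.two_mul_div_two_of_even heven)
  rcases hs with rfl | rfl | rfl <;> cases g <;>
    simp only [r_one_pow, r_mul_sr, r_mul_r, sr_mul_r, sr_mul_sr, cyclePos, map_add, map_sub,
      map_zero, h1, hhalf]
  · exact .inl (by ring)
  · exact .inr (.inl (by ring))
  · exact .inr (.inl (by ring))
  · exact .inl (by ring)
  · exact .inr (.inr (add_comm _ _))
  · exact .inr (.inr (by linear_combination -ZMod.natCast_add_self_eq_zero n))

theorem chordDist_cyclePos_mul_le (heven : Even n) {s : DihedralGroup n}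
    (hs : s ∈ ladderGens n) (g : DihedralGroup n) :
    chordDist (n : ZMod (2 * n)) (cyclePos (s * g)) ≤
      chordDist (n : ZMod (2 * n)) (cyclePos g) + 1 := by
  rcases cyclePos_mul heven hs g with h | h | h <;> rw [h]
  · exact chordDist_add_le (ZMod.natAbs_valMinAbs_one_le _) _
  · rw [sub_eq_add_neg]
    exact chordDist_add_le
      ((ZMod.natAbs_valMinAbs_neg 1).trans_le (ZMod.natAbs_valMinAbs_one_le _)) _
  · exact chordDist_add_self_le (ZMod.natCast_add_self_eq_zero n) _

theorem sr_natCast_eq (m : ℕ) :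
    (sr (m : ZMod n)) = (sr 0 * (r 1 * sr 0)) ^ m * sr 0 := by
  simp [r_mul_sr, sr_mul_sr, r_pow]

theorem sr_neg_one_sub_natCast_eq (m : ℕ) :
    (sr (-1 - m : ZMod n)) = (r 1 * sr 0 * sr 0) ^ m * (r 1 * sr 0) := by
  simp [r_mul_sr, sr_mul_sr, r_pow]

theorem exists_list_prod_eq_sr {x : ZMod n} {m : ℕ} (hx : x = m ∨ x = -1 - m) :
    ∃ l : List (DihedralGroup n),
      (∀ y ∈ l, y ∈ ladderGens n) ∧ l.prod = sr x ∧ l.length = 2 * m + 1 := by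
  have ha : sr 0 ∈ ladderGens n := .inl rfl
  have hb : r 1 * sr 0 ∈ ladderGens n := .inr (.inl rfl)
  rcases hx with rfl | rfl
  · rw [sr_natCast_eq]; exact exists_list_prod_eq_pow_mul ha hb m
  · rw [sr_neg_one_sub_natCast_eq]; exact exists_list_prod_eq_pow_mul hb ha m

theorem wordLength_sr_le {x : ZMod n} {m : ℕ} (hx : x = m ∨ x = -1 - m) :
    wordLength (ladderGens n) (sr x) ≤ 2 * m + 1 := by
  obtain ⟨l, hl, hprod, hlen⟩ := exists_list_prod_eq_sr hx
  exact hlen ▸ wordLength_le_length hl hprod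

theorem wordLength_sr_add_half_le (heven : Even n) {x : ZMod n} {m : ℕ}
    (hx : x = m ∨ x = -1 - m) :
    wordLength (ladderGens n) (sr (x + (n / 2 : ℕ))) ≤ 2 * m + 2 := by
  obtain ⟨l, hl, hprod, hlen⟩ := exists_list_prod_eq_sr hx
  have hc : r 1 ^ (n / 2) ∈ ladderGens n := .inr (.inr rfl)
  refine (wordLength_le_length (l := r 1 ^ (n / 2) :: l) (List.forall_mem_cons.2 ⟨hc, hl⟩)
    ?_).trans_eq (by rw [List.length_cons, hlen])
  rw [List.prod_cons, hprod, r_one_pow, r_mul_sr, sub_eq_add_neg, ZMod.neg_natCast_half heven]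

theorem wordLength_sr_le_half (hn : n ≠ 0) (heven : Even n) (x : ZMod n) :
    wordLength (ladderGens n) (sr x) ≤ n / 2 := by
  have : NeZero n := ⟨hn⟩
  have hn2 := Nat.two_mul_div_two_of_even heven
  have hzero : (n : ZMod n) = 0 := ZMod.natCast_self n
  obtain ⟨v, hv, rfl⟩ : ∃ v < n, (v : ZMod n) = x := ⟨x.val, x.val_lt, x.natCast_zmod_val⟩
  obtain hv₁ | hv₁ := le_or_gt (2 * v + 1) (n / 2)
  · exact (wordLength_sr_le (.inl rfl)).trans hv₁
  obtain hv₂ | hv₂ := lt_or_ge v (n / 2)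
  · have hx : (v : ZMod n) = -1 - ((n / 2 - 1 - v : ℕ) : ZMod n) + (n / 2 : ℕ) := by
      rw [Nat.cast_sub (by omega), Nat.cast_sub (by omega)]; push_cast; ring
    rw [hx]; exact (wordLength_sr_add_half_le heven (.inr rfl)).trans (by omega)
  obtain hv₃ | hv₃ := le_or_gt (2 * (v - n / 2) + 2) (n / 2)
  · have hx : (v : ZMod n) = ((v - n / 2 : ℕ) : ZMod n) + (n / 2 : ℕ) := by
      rw [Nat.cast_sub hv₂]; ring
    rw [hx]; exact (wordLength_sr_add_half_le heven (.inl rfl)).trans hv₃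
  · have hx : (v : ZMod n) = -1 - ((n - 1 - v : ℕ) : ZMod n) := by
      rw [Nat.cast_sub (by omega), Nat.cast_sub (by omega)]; push_cast
      linear_combination hzero
    rw [hx]; exact (wordLength_sr_le (.inr rfl)).trans (by omega)

theorem chordDist_cyclePos_sr_quarter (hn : 4 ≤ n) (heven : Even n) :
    chordDist (n : ZMod (2 * n)) (cyclePos (sr ((n / 2 / 2 : ℕ) : ZMod n))) = n / 2 := by
  have hpos : cyclePos (sr ((n / 2 / 2 : ℕ) : ZMod n)) =
      ((2 * (n / 2 / 2) + 1 : ℕ) : ZMod (2 * n)) := by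
    simp [cyclePos, ZMod.doubleHom_natCast]
  rw [hpos, chordDist, ← Nat.cast_add, ZMod.valMinAbs_natCast_of_le_half (by omega),
    ZMod.valMinAbs_natCast_of_half_lt (by omega) (by omega)]
  have hneg : ((2 * (n / 2 / 2) + 1 + n : ℕ) : ℤ) - (2 * n : ℕ) =
      -((n - (2 * (n / 2 / 2) + 1) : ℕ) : ℤ) := by
    rw [Nat.cast_sub (by omega)]; push_cast; ring
  rw [hneg, Int.natAbs_neg, Int.natAbs_natCast, Int.natAbs_natCast]
  have := Nat.two_mul_div_two_of_even heven
  omega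

theorem half_le_wordLength_sr_quarter (hn : 4 ≤ n) (heven : Even n) :
    n / 2 ≤ wordLength (ladderGens n) (sr ((n / 2 / 2 : ℕ) : ZMod n)) := by
  obtain ⟨l, hl, hprod, -⟩ := exists_list_prod_eq_sr (m := n / 2 / 2) (.inl rfl)
  have := apply_le_add_wordLength (φ := fun g ↦ chordDist (n : ZMod (2 * n)) (cyclePos g))
    (fun _ hs g ↦ chordDist_cyclePos_mul_le heven hs g) hl hprod
  rwa [one_def, show cyclePos (r 0 : DihedralGroup n) = 0 from map_zero _, chordDist_zero,
    zero_add, chordDist_cyclePos_sr_quarter hn heven] at this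

theorem exists_conj_mem_ladderGens_eq_sr (x : ZMod n) :
    ∃ g : DihedralGroup n, ∃ s ∈ ladderGens n, g * s * g⁻¹ = sr x := by
  obtain ⟨z, rfl⟩ := ZMod.intCast_surjective x
  obtain ⟨t, rfl | rfl⟩ := Int.even_or_odd' z
  · refine ⟨r (-t), sr 0, .inl rfl, ?_⟩
    rw [inv_r, r_mul_sr, sr_mul_r]; congr 1; push_cast; ring
  · refine ⟨r (-t - 1), r 1 * sr 0, .inr (.inl rfl), ?_⟩
    rw [inv_r, r_mul_sr, r_mul_sr, sr_mul_r]; congr 1; push_cast; ring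

theorem exists_conj_sr_eq_sr (g : DihedralGroup n) (x : ZMod n) :
    ∃ y, g * sr x * g⁻¹ = sr y := by
  cases g <;> simp [r_mul_sr, sr_mul_r, sr_mul_sr]

theorem conj_r_one_pow_half (heven : Even n) (g : DihedralGroup n) :
    g * r 1 ^ (n / 2) * g⁻¹ = r 1 ^ (n / 2) := by
  rw [r_one_pow]
  cases g with
  | r i => rw [inv_r, r_mul_r, r_mul_r, add_neg_cancel_comm]
  | sr i => rw [inv_sr, sr_mul_r, sr_mul_sr, sub_add_cancel_left, ZMod.neg_natCast_half heven]

theorem wordLength_conj_le_half (hn : n ≠ 0) (heven : Even n) {s : DihedralGroup n}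
    (hs : s ∈ ladderGens n) (g : DihedralGroup n) :
    wordLength (ladderGens n) (g * s * g⁻¹) ≤ n / 2 := by
  rcases hs with rfl | rfl | rfl
  · obtain ⟨y, hy⟩ := exists_conj_sr_eq_sr g 0
    exact hy ▸ wordLength_sr_le_half hn heven y
  · obtain ⟨y, hy⟩ := exists_conj_sr_eq_sr g (0 - 1)
    rw [r_mul_sr, hy]
    exact wordLength_sr_le_half hn heven y
  · rw [conj_r_one_pow_half heven]
    have hc : ∀ y ∈ [r 1 ^ (n / 2)], y ∈ ladderGens n := by simp [ladderGens]
    have := Nat.two_mul_div_two_of_even heven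
    refine (wordLength_le_length hc List.prod_singleton).trans ?_
    rw [List.length_singleton]
    omega

end DihedralGroup

theorem stmt13 (n : ℕ) (hn : 6 ≤ n) (heven : Even n) :
    letI S : Set (DihedralGroup n) := {sr 0, r 1 * sr 0, (r 1 : DihedralGroup n) ^ (n / 2)}
    IsGreatest {k | ∃ g : DihedralGroup n, ∃ s ∈ S,
        k = wordLength S (g * s * g⁻¹)} (n / 2) := by
  obtain ⟨g, s, hs, hconj⟩ := exists_conj_mem_ladderGens_eq_sr ((n / 2 / 2 : ℕ) : ZMod n)
  refine ⟨⟨g, s, hs, le_antisymm ?_ ?_⟩, ?_⟩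
  · rw [hconj]
    exact half_le_wordLength_sr_quarter (by omega) heven
  · exact wordLength_conj_le_half (by omega) heven hs g
  · rintro k ⟨g, s, hs, rfl⟩
    exact wordLength_conj_le_half (by omega) heven hs g
end
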